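/- Cayley–Hamilton theorem for Manin matrices: let M be an n×n Manin matrix over an associative unital (possibly noncommutative) ring R, and let h_0, …, h_n ∈ R be the coefficients of its characteristic polynomial, defined by det^col(t·1_n − M) = Σ_{k=0}^n h_k·t^k in the polynomial ring R[t] with central variable t. Then Σ_{k=0}^n h_k·M^k = 0 (the zero n×n matrix), i.e. M satisfies its own characteristic polynomial with the coefficients h_k placed on the left of the powers M^k. -/

import Mathlib

open scoped BigOperators

/-- A matrix `M` over a (possibly noncommutative) ring is a *Manin matrix* if
entries of the same column commute and cross-commutators of 2×2 submatrices are equal. -/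
def Matrix.IsManin {R : Type*} [Ring R] {n m : ℕ} (M : Matrix (Fin n) (Fin m) R) : Prop :=
  (∀ i k : Fin n, ∀ j : Fin m, M i j * M k j = M k j * M i j) ∧
  (∀ i k : Fin n, ∀ j l : Fin m,
    M i j * M k l - M k l * M i j = M k j * M i l - M i l * M k j)

/-- Column determinant: factors multiplied in order of increasing column index. -/
noncomputable def Matrix.detCol {R : Type*} [Ring R] {n : ℕ}
    (M : Matrix (Fin n) (Fin n) R) : R :=
  ∑ σ : Equiv.Perm (Fin n),
    (Equiv.Perm.sign σ : ℤ) • ((List.finRange n).map (fun i => M (σ i) i)).prod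

/-- Row determinant: factors multiplied in order of increasing row index. -/
noncomputable def Matrix.detRow {R : Type*} [Ring R] {n : ℕ}
    (M : Matrix (Fin n) (Fin n) R) : R :=
  ∑ σ : Equiv.Perm (Fin n),
    (Equiv.Perm.sign σ : ℤ) • ((List.finRange n).map (fun i => M i (σ i))).prod

/-- Row permanent: factors multiplied in order of increasing row index. -/
noncomputable def Matrix.permRow {R : Type*} [Ring R] {n : ℕ}
    (M : Matrix (Fin n) (Fin n) R) : R :=
  ∑ σ : Equiv.Perm (Fin n), ((List.finRange n).map (fun i => M i (σ i))).prod


/-!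
Column determinants of Manin matrices obey the usual column rules. Exchanging two adjacent
columns changes the sign: after pairing `σ` with `σ * swap`, this is exactly the equality of
cross-commutators. Two equal adjacent columns make `detCol` vanish because entries of a column
commute. Adjacent transpositions generate the symmetric group, so `detCol` is alternating under
every column permutation and vanishes whenever two columns are equal.

Expanding along the last column, whose entries are the rightmost factors of every product,
gives a column adjugate with `adj N * N = detCol N • 1`. For `N = t • 1 - M`, which is again
Manin because `t` is central, write `adj N = ∑ b_r t^r` with `b_r` over `R`. Comparing
coefficients gives `h_0 • 1 = -(b_0 * M)` and `h_{r+1} • 1 = b_r - b_{r+1} * M`, so the sum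
`∑ h_k • M^k` telescopes to `0`.
-/

open Equiv Equiv.Perm Polynomial

theorem sub_mul_sub_sub_sub_mul_sub_of_central {R : Type*} [Ring R] {a b x y : R}
    (ha : ∀ z, Commute a z) (hb : ∀ z, Commute b z) :
    (a - x) * (b - y) - (b - y) * (a - x) = x * y - y * x := by
  have h : (a - x) * (b - y) - (b - y) * (a - x) =
      (a * b - b * a) - (a * y - y * a) - (x * b - b * x) + (x * y - y * x) := by noncomm_ring
  rw [h, (ha b).eq, (ha y).eq, (hb x).eq]
  abel

theorem exists_prod_ofFn_eq_mul_mul_adjacent {M : Type*} [Monoid M] {n : ℕ}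
    (g : Fin (n + 1) → M) (i : Fin n) : ∃ x y : M, ∀ f : Fin (n + 1) → M,
      (∀ j, j ≠ i.castSucc → j ≠ i.succ → f j = g j) →
        (List.ofFn f).prod = x * (f i.castSucc * f i.succ) * y := by
  induction n with
  | zero => exact i.elim0
  | succ n ih =>
    cases i using Fin.cases with
    | zero =>
      refine ⟨1, (List.ofFn fun j : Fin n => g j.succ.succ).prod, fun f hf => ?_⟩
      have htail : (fun j : Fin n => f j.succ.succ) = fun j => g j.succ.succ :=
        funext fun j => hf _ (Fin.succ_ne_zero _) ((Fin.succ_injective _).ne (Fin.succ_ne_zero _))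
      simp [List.ofFn_succ, htail, mul_assoc]
    | succ i =>
      obtain ⟨x, y, hxy⟩ := ih (fun j => g j.succ) i
      refine ⟨g 0 * x, y, fun f hf => ?_⟩
      have h0 : f 0 = g 0 := hf 0 (by simp [eq_comm]) (Fin.succ_ne_zero _).symm
      have htail := hxy (fun j => f j.succ) fun j h1 h2 =>
        hf j.succ (by simpa [← Fin.succ_castSucc] using h1) ((Fin.succ_injective _).ne h2)
      simp only [Fin.succ_castSucc] at htail
      rw [List.ofFn_succ, List.prod_cons, htail, h0]
      simp only [mul_assoc]

theorem Finset.sum_perm_eq_zero_of_add_mul_swap_eq_zero {α M : Type*} [Fintype α]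
    [DecidableEq α] [AddCommMonoid M] {f : Perm α → M} {a b : α} (hab : a ≠ b)
    (hf : ∀ σ, f σ + f (σ * swap a b) = 0) : ∑ σ, f σ = 0 :=
  Finset.sum_involution (fun σ _ => σ * swap a b) (fun σ _ => hf σ)
    (fun σ _ _ h => hab (swap_eq_one_iff.1 (mul_eq_left.1 h)))
    (fun _ _ => Finset.mem_univ _) (fun σ _ => by simp [mul_assoc])

def Equiv.Perm.decomposeFinLast {n : ℕ} : Perm (Fin (n + 1)) ≃ Fin (n + 1) × Perm (Fin n) :=
  (finSuccEquivLast.permCongr.trans decomposeOption).trans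
    (prodCongr finSuccEquivLast.symm (Equiv.refl _))

namespace Equiv.Perm

variable {n : ℕ} (j : Fin (n + 1)) (τ : Perm (Fin n))

@[simp]
theorem decomposeFinLast_symm_apply_last : decomposeFinLast.symm (j, τ) (Fin.last n) = j := by
  simp [decomposeFinLast, permCongr_apply]

@[simp]
theorem decomposeFinLast_symm_apply_castSucc (u : Fin n) :
    decomposeFinLast.symm (j, τ) u.castSucc = swap j (Fin.last n) (τ u).castSucc := by
  simp [decomposeFinLast, permCongr_apply, finSuccEquivLast.symm.injective.map_swap, swap_comm]

theorem sign_decomposeFinLast_symm :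
    sign (decomposeFinLast.symm (j, τ)) = sign (swap j (Fin.last n)) * sign τ := by
  simp [decomposeFinLast, eq_comm (a := (none : Option (Fin n))), ← Equiv.eq_symm_apply,
    sign_swap']

end Equiv.Perm

namespace Matrix

variable {R S : Type*} [Ring R] [Ring S] {n : ℕ}

section IsManin

variable {m : ℕ} {M : Matrix (Fin n) (Fin m) R}

theorem IsManin.submatrix (hM : M.IsManin) {a b : ℕ} (e : Fin a → Fin n) (f : Fin b → Fin m) :
    (M.submatrix e f).IsManin :=
  ⟨fun i k j => hM.1 (e i) (e k) (f j), fun i k j l => hM.2 (e i) (e k) (f j) (f l)⟩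

theorem IsManin.map (hM : M.IsManin) (f : R →+* S) : (M.map f).IsManin := by
  refine ⟨fun i k j => ?_, fun i k j l => ?_⟩
  · simp only [map_apply, ← map_mul, hM.1 i k j]
  · simp only [map_apply, ← map_mul, ← map_sub, hM.2 i k j l]

theorem IsManin.diagonal_sub {M : Matrix (Fin n) (Fin n) R} (hM : M.IsManin) {c : R}
    (hc : ∀ x, Commute c x) : (diagonal (fun _ => c) - M).IsManin := by
  set d : Matrix (Fin n) (Fin n) R := diagonal fun _ => c
  have hd : ∀ i j x, Commute (d i j) x := fun i j x => by
    by_cases hij : i = j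
    · simpa [d, hij] using hc x
    · simp [d, hij]
  have hcomm : ∀ i j k l, (d i j - M i j) * (d k l - M k l) - (d k l - M k l) * (d i j - M i j) =
      M i j * M k l - M k l * M i j := fun i j k l =>
    sub_mul_sub_sub_sub_mul_sub_of_central (hd i j) (hd k l)
  refine ⟨fun i k j => ?_, fun i k j l => ?_⟩
  · rw [sub_apply, sub_apply, ← sub_eq_zero, hcomm, sub_eq_zero, hM.1 i k j]
  · simp only [sub_apply]
    rw [hcomm, hcomm, hM.2 i k j l]

end IsManin

theorem detCol_eq_sum_prod_ofFn (A : Matrix (Fin n) (Fin n) R) :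
    A.detCol = ∑ σ : Perm (Fin n), (sign σ : ℤ) • (List.ofFn fun j => A (σ j) j).prod := by
  simp only [detCol, List.ofFn_eq_map]

namespace IsManin

variable {A : Matrix (Fin (n + 1)) (Fin (n + 1)) R}

/-- Not a consequence of `detCol_submatrix_swap_adjacent`, which only gives `2 • A.detCol = 0`. -/
theorem detCol_eq_zero_of_adjacent_cols_eq (hA : A.IsManin) (i : Fin n)
    (hcol : ∀ r, A r i.castSucc = A r i.succ) : A.detCol = 0 := by
  have hne : i.castSucc ≠ i.succ := Fin.castSucc_lt_succ.ne
  rw [detCol_eq_sum_prod_ofFn]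
  refine Finset.sum_perm_eq_zero_of_add_mul_swap_eq_zero hne fun σ => ?_
  obtain ⟨x, y, hxy⟩ := exists_prod_ofFn_eq_mul_mul_adjacent (fun j => A (σ j) j) i
  rw [hxy _ fun _ _ _ => rfl, hxy _ fun j h1 h2 => by simp [swap_apply_of_ne_of_ne h1 h2],
    Perm.sign_mul, sign_swap hne]
  simp only [Perm.mul_apply, swap_apply_left, swap_apply_right, ← hcol, hA.1 (σ i.castSucc)]
  simp

theorem detCol_submatrix_swap_adjacent (hA : A.IsManin) (i : Fin n) :
    (A.submatrix id (Equiv.swap i.castSucc i.succ)).detCol = -A.detCol := by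
  set s := Equiv.swap i.castSucc i.succ
  have hne : i.castSucc ≠ i.succ := Fin.castSucc_lt_succ.ne
  have hreindex : (A.submatrix id s).detCol =
      ∑ σ : Perm (Fin (n + 1)),
        -((sign σ : ℤ) • (List.ofFn fun j => A (σ (s j)) (s j)).prod) := by
    rw [detCol_eq_sum_prod_ofFn]
    refine Fintype.sum_equiv (Equiv.mulRight s) _ _ fun σ => ?_
    simp [s, Perm.sign_mul, sign_swap hne, Perm.mul_apply]
  rw [hreindex, eq_neg_iff_add_eq_zero, detCol_eq_sum_prod_ofFn, ← Finset.sum_add_distrib]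
  refine Finset.sum_perm_eq_zero_of_add_mul_swap_eq_zero hne fun σ => ?_
  obtain ⟨x, y, hxy⟩ := exists_prod_ofFn_eq_mul_mul_adjacent (fun j => A (σ j) j) i
  have hs : ∀ j, j ≠ i.castSucc → j ≠ i.succ → s j = j := fun _ => swap_apply_of_ne_of_ne
  rw [hxy _ fun _ _ _ => rfl, hxy _ fun j h1 h2 => by simp [hs j h1 h2],
    hxy _ fun j h1 h2 => by simp [s, hs j h1 h2], hxy _ fun j h1 h2 => by simp [s, hs j h1 h2],
    Perm.sign_mul, sign_swap hne]
  simp only [s, Perm.mul_apply, swap_apply_left, swap_apply_right, Units.val_neg,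
    mul_neg_one, neg_smul, neg_neg]
  set a := A (σ i.castSucc) i.castSucc
  set b := A (σ i.succ) i.succ
  set a' := A (σ i.succ) i.castSucc
  set b' := A (σ i.castSucc) i.succ
  have hManin : a * b - b * a - (a' * b' - b' * a') = 0 :=
    sub_eq_zero.2 (hA.2 (σ i.castSucc) (σ i.succ) i.castSucc i.succ)
  calc _ = (sign σ : ℤ) • (x * (a * b - b * a - (a' * b' - b' * a')) * y) := by
        simp only [mul_sub, sub_mul, smul_sub]
        abel
    _ = 0 := by rw [hManin, mul_zero, zero_mul, smul_zero]

theorem detCol_submatrix_perm (hA : A.IsManin) (σ : Perm (Fin (n + 1))) :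
    (A.submatrix id σ).detCol = (sign σ : ℤ) • A.detCol := by
  induction σ using Submonoid.induction_of_closure_eq_top_right
    (mclosure_swap_castSucc_succ n) with
  | one => simp
  | mul_right σ t ht ih =>
    obtain ⟨i, rfl⟩ := ht
    have hσ : (A.submatrix id σ).IsManin := hA.submatrix _ _
    have hsub : A.submatrix id ⇑(σ * Equiv.swap i.castSucc i.succ) =
        (A.submatrix id σ).submatrix id (Equiv.swap i.castSucc i.succ) := rfl
    rw [hsub, hσ.detCol_submatrix_swap_adjacent, ih, Perm.sign_mul,
      sign_swap Fin.castSucc_lt_succ.ne]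
    simp

theorem detCol_eq_zero_of_cols_eq (hA : A.IsManin) {p q : Fin (n + 1)} (hpq : p ≠ q)
    (hcol : ∀ r, A r p = A r q) : A.detCol = 0 := by
  wlog hlt : p < q generalizing p q
  · exact this hpq.symm (fun r => (hcol r).symm) (lt_of_le_of_ne (not_lt.1 hlt) hpq.symm)
  obtain ⟨i, rfl⟩ := Fin.exists_castSucc_eq.2 (Fin.ne_last_of_lt hlt)
  set τ := Equiv.swap i.succ q
  have hτ : (A.submatrix id τ).detCol = 0 := by
    refine (hA.submatrix _ _).detCol_eq_zero_of_adjacent_cols_eq i fun r => ?_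
    simp [τ, swap_apply_of_ne_of_ne Fin.castSucc_lt_succ.ne hpq, hcol]
  rwa [hA.detCol_submatrix_perm, ← Units.smul_def, smul_eq_zero_iff_eq] at hτ

end IsManin

theorem detCol_eq_sum_detCol_mul_last (A : Matrix (Fin (n + 1)) (Fin (n + 1)) R) :
    A.detCol = ∑ j, (sign (Equiv.swap j (Fin.last n)) : ℤ) •
      ((A.submatrix (Equiv.swap j (Fin.last n) ∘ Fin.castSucc) Fin.castSucc).detCol *
        A j (Fin.last n)) := by
  rw [detCol_eq_sum_prod_ofFn, ← decomposeFinLast.symm.sum_comp, Fintype.sum_prod_type]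
  refine Finset.sum_congr rfl fun j _ => ?_
  rw [detCol_eq_sum_prod_ofFn, Finset.sum_mul, Finset.smul_sum]
  refine Finset.sum_congr rfl fun τ _ => ?_
  rw [sign_decomposeFinLast_symm, List.ofFn_succ', List.prod_concat, Units.val_mul, mul_smul,
    smul_mul_assoc]
  simp

/-- Entry `(i, j)` is the minor of `N` without row `j` and column `i`, the last row and column
taking their places, with the signs of `detCol_eq_sum_detCol_mul_last`. -/
noncomputable def adjugateCol (N : Matrix (Fin (n + 1)) (Fin (n + 1)) R) :
    Matrix (Fin (n + 1)) (Fin (n + 1)) R :=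
  of fun i j => (sign (Equiv.swap i (Fin.last n)) * sign (Equiv.swap j (Fin.last n)) : ℤ) •
    (N.submatrix (Equiv.swap j (Fin.last n) ∘ Fin.castSucc)
      (Equiv.swap i (Fin.last n) ∘ Fin.castSucc)).detCol

theorem adjugateCol_mul_apply (N : Matrix (Fin (n + 1)) (Fin (n + 1)) R) (i k : Fin (n + 1)) :
    (N.adjugateCol * N) i k = (sign (Equiv.swap i (Fin.last n)) : ℤ) •
      (N.submatrix id (Function.update (Equiv.swap i (Fin.last n)) (Fin.last n) k)).detCol := by
  rw [detCol_eq_sum_detCol_mul_last, Finset.smul_sum, mul_apply]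
  refine Finset.sum_congr rfl fun j _ => ?_
  simp [adjugateCol, submatrix_submatrix, Function.comp_def, Fin.castSucc_ne_last, mul_smul,
    mul_assoc]

theorem IsManin.adjugateCol_mul {N : Matrix (Fin (n + 1)) (Fin (n + 1)) R} (hN : N.IsManin) :
    N.adjugateCol * N = N.detCol • 1 := by
  ext i k
  set e := Equiv.swap i (Fin.last n)
  rw [adjugateCol_mul_apply, smul_apply, one_apply, smul_eq_mul, mul_ite, mul_one, mul_zero]
  split_ifs with hik
  · subst hik
    have he : Function.update e (Fin.last n) i = e := by simp [e]
    rw [he, hN.detCol_submatrix_perm, ← mul_smul, ← Units.val_mul, Int.units_mul_self,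
      Units.val_one, one_smul]
  · have hek : e k ≠ Fin.last n := by simpa [e, swap_apply_eq_iff] using Ne.symm hik
    refine smul_eq_zero_of_right _ ((hN.submatrix _ _).detCol_eq_zero_of_cols_eq hek fun r => ?_)
    simp [Function.update_of_ne hek, e]

theorem natDegree_detCol_le {U : Matrix (Fin n) (Fin n) R[X]}
    (hU : ∀ i j, (U i j).natDegree ≤ 1) : U.detCol.natDegree ≤ n := by
  refine natDegree_sum_le_of_forall_le _ _ fun σ _ => (natDegree_smul_le _ _).trans ?_
  refine (natDegree_list_prod_le _).trans ?_
  refine (List.sum_le_card_nsmul _ 1 ?_).trans (by simp)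
  simp [hU]

theorem natDegree_diagonal_X_sub_map_C_le {ι : Type*} [DecidableEq ι] (M : Matrix ι ι R)
    (i j : ι) : (((diagonal fun _ => X) - M.map C : Matrix ι ι R[X]) i j).natDegree ≤ 1 := by
  by_cases hij : i = j <;> simp [hij, natDegree_X_le]

theorem sum_coeff_smul_pow_eq_zero_of_mul_eq {ι : Type*} [Fintype ι] [DecidableEq ι]
    {M : Matrix ι ι R} {B : Matrix ι ι R[X]} {p : R[X]}
    (hB : B * (diagonal (fun _ => X) - M.map C) = p • 1) {D : ℕ}
    (hD : ∀ i j, (B i j).natDegree < D) :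
    ∑ k ∈ Finset.range (D + 1), p.coeff k • M ^ k = 0 := by
  set N : Matrix ι ι R[X] := diagonal (fun _ => X) - M.map C with hN
  set b : ℕ → Matrix ι ι R := fun r => of fun i j => (B i j).coeff r
  have hcoeff : ∀ r i k, ((B * N) i k).coeff r =
      (p.coeff r • (1 : Matrix ι ι R)) i k := fun r i k => by
    rw [hB]; simp [one_apply, apply_ite (coeff · r)]
  have h0 : p.coeff 0 • (1 : Matrix ι ι R) = -(b 0 * M) := by
    ext i k
    rw [← hcoeff]
    simp only [hN, Matrix.mul_sub, sub_apply, mul_diagonal]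
    simp [b, mul_apply, finsetSum_coeff]
  have hsucc : ∀ r, p.coeff (r + 1) • (1 : Matrix ι ι R) = b r - b (r + 1) * M := fun r => by
    ext i k
    rw [← hcoeff]
    simp only [hN, Matrix.mul_sub, sub_apply, mul_diagonal]
    simp [b, mul_apply, finsetSum_coeff]
  have hbD : b D = 0 := by
    ext i j
    exact coeff_eq_zero_of_natDegree_lt (hD i j)
  calc ∑ k ∈ Finset.range (D + 1), p.coeff k • M ^ k
      = ∑ k ∈ Finset.range D, (p.coeff (k + 1) • (1 : Matrix ι ι R)) * M ^ (k + 1) +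
          (p.coeff 0 • (1 : Matrix ι ι R)) * M ^ 0 := by
        simp only [Finset.sum_range_succ', smul_mul_assoc, one_mul]
    _ = ∑ k ∈ Finset.range D, (b k * M ^ (k + 1) - b (k + 1) * M ^ (k + 1 + 1)) - b 0 * M := by
        simp only [hsucc, h0, sub_mul, mul_assoc, ← pow_succ', pow_zero, mul_one,
          ← sub_eq_add_neg]
    _ = 0 := by rw [Finset.sum_range_sub', hbD]; simp

end Matrix

/-- Cayley–Hamilton theorem for Manin matrices: with
`detCol (t • 1 - M) = ∑ k, h k * t^k` in `R[t]`, one has `∑ k, h k • M^k = 0`. -/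
theorem cayley_hamilton_manin {R : Type*} [Ring R] {n : ℕ}
    (M : Matrix (Fin n) (Fin n) R) (hM : M.IsManin) (h : ℕ → R)
    (hdef : ∀ k : ℕ, h k =
      ((Matrix.diagonal (fun _ : Fin n => (Polynomial.X : Polynomial R)) -
        M.map (fun a => Polynomial.C a)).detCol).coeff k) :
    ∑ k ∈ Finset.range (n + 1), h k • M ^ k = 0 := by
  obtain _ | n := n
  · exact Subsingleton.elim _ _
  have hN : (Matrix.diagonal (fun _ => X) - M.map C).IsManin :=
    (hM.map C).diagonal_sub fun _ => commute_X _
  simp only [hdef]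
  refine Matrix.sum_coeff_smul_pow_eq_zero_of_mul_eq hN.adjugateCol_mul fun i j => ?_
  refine Nat.lt_succ_of_le ((natDegree_smul_le _ _).trans (Matrix.natDegree_detCol_le ?_))
  exact fun _ _ => Matrix.natDegree_diagonal_X_sub_map_C_le M _ _
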